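/- Let k ≥ 1 and let w = (01)^k(10)^k be the binary string of length 4k. For any integer p with 1 ≤ p < 2k, the number of pairs (i,j) such that w[i..j] is a run of w with minimal period at least p is at least k − ⌊p/2⌋. -/

import Mathlib

/-- `p` is a period of the substring `t[i..j]` of the 1-indexed string `t`:
`1 ≤ p ≤ |t[i..j]| = j - i + 1`, and `t[k] = t[k + p]` whenever both positions
lie in `[i..j]` (vacuously, the length is always a period). -/
def IsPeriodOf {α : Type*} (t : ℕ → α) (i j p : ℕ) : Prop :=
  1 ≤ p ∧ p ≤ j + 1 - i ∧ ∀ k, i ≤ k → k + p ≤ j → t (k + p) = t k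

/-- The minimal period of the substring `t[i..j]`. -/
noncomputable def minPeriod {α : Type*} (t : ℕ → α) (i j : ℕ) : ℕ :=
  sInf {p | IsPeriodOf t i j p}

/-- `t[i..j]` is a run of the string `t[1..n]`: its exponent is at least `2`
(i.e. `j - i + 1 ≥ 2 · minPeriod`), and the extensions `t[i-1..j]` (if `i > 1`)
and `t[i..j+1]` (if `j < n`) have strictly larger minimal periods. -/
def IsRun {α : Type*} (t : ℕ → α) (n i j : ℕ) : Prop :=
  1 ≤ i ∧ i ≤ j ∧ j ≤ n ∧
  2 * minPeriod t i j ≤ j + 1 - i ∧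
  (1 < i → minPeriod t i j < minPeriod t (i - 1) j) ∧
  (j < n → minPeriod t i j < minPeriod t i (j + 1))

/-- The string `(01)^k (10)^k` of length `4k` over the ordered alphabet
`{0, 1} ⊆ ℕ`, indexed from `1`: positions `1..2k` alternate `0,1,0,1,…` and
positions `2k+1..4k` alternate `1,0,1,0,…`. -/
def zeroOneWord (k : ℕ) : ℕ → ℕ := fun m =>
  if m ≤ 2 * k then (if m % 2 = 1 then 0 else 1)
  else (if m % 2 = 1 then 1 else 0)

/-!
For `1 ≤ m ≤ k`, the factor `w[2m..4k+1-2m]` of `w = (01)^k (10)^k` is centred on the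
`11` at positions `2k, 2k+1` and is the square of a word of odd length `2(k-m)+1`, which
is its minimal period: an even shift fails across the centre, a smaller odd shift fails
inside the left half. Neither one-letter extension keeps this period, so each such factor is a
run, and those with `m ≤ k - ⌊p/2⌋` have minimal period `2(k-m)+1 ≥ p`.
-/

section Periods

variable {α : Type*} {t : ℕ → α} {i j i' j' p : ℕ}

theorem IsPeriodOf.minPeriod_le (h : IsPeriodOf t i j p) : minPeriod t i j ≤ p :=
  Nat.sInf_le h

theorem isPeriodOf_minPeriod (hij : i ≤ j) : IsPeriodOf t i j (minPeriod t i j) :=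
  Nat.sInf_mem (s := {q | IsPeriodOf t i j q})
    ⟨j + 1 - i, by omega, le_rfl, fun _ _ _ => by omega⟩

theorem IsPeriodOf.of_le_of_le (h : IsPeriodOf t i' j' p) (hi : i' ≤ i) (hj : j ≤ j')
    (hp : p ≤ j + 1 - i) : IsPeriodOf t i j p :=
  ⟨h.1, hp, fun x hx hxp => h.2.2 x (hi.trans hx) (hxp.trans hj)⟩

theorem minPeriod_eq_of_isPeriodOf (h : IsPeriodOf t i j p)
    (hmin : ∀ q < p, ¬IsPeriodOf t i j q) : minPeriod t i j = p :=
  le_antisymm h.minPeriod_le <| not_lt.1 fun hlt =>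
    hmin _ hlt (Nat.sInf_mem (s := {q | IsPeriodOf t i j q}) ⟨p, h⟩)

/-- A period of the extension that fits into `t[i..j]` restricts to a period of `t[i..j]`. -/
theorem minPeriod_lt_minPeriod_of_le_of_le (hij : i ≤ j) (hi : i' ≤ i) (hj : j ≤ j')
    (hext : ¬IsPeriodOf t i' j' (minPeriod t i j)) : minPeriod t i j < minPeriod t i' j' := by
  have hper' := isPeriodOf_minPeriod (t := t) (hi.trans (hij.trans hj))
  rcases le_or_gt (minPeriod t i' j') (j + 1 - i) with hfit | hlong
  · have hle := (hper'.of_le_of_le hi hj hfit).minPeriod_le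
    exact lt_of_le_of_ne hle fun heq => hext (heq ▸ hper')
  · exact lt_of_le_of_lt (isPeriodOf_minPeriod hij).2.1 hlong

theorem setOf_isRun_finite (t : ℕ → α) (n : ℕ) :
    {ij : ℕ × ℕ | IsRun t n ij.1 ij.2}.Finite :=
  ((Set.finite_Icc 1 n).prod (Set.finite_Icc 1 n)).subset
    fun _ ⟨h1, h2, h3, _⟩ => ⟨⟨h1, by omega⟩, ⟨by omega, h3⟩⟩

end Periods

section ZeroOneWord

variable {k m : ℕ}

theorem zeroOneWord_isPeriodOf (hm : 1 ≤ m) (hmk : m ≤ k) :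
    IsPeriodOf (zeroOneWord k) (2 * m) (4 * k + 1 - 2 * m) (2 * (k - m) + 1) := by
  refine ⟨by omega, by omega, fun x _ _ => ?_⟩
  simp only [zeroOneWord]
  split_ifs <;> omega

theorem zeroOneWord_minPeriod (hm : 1 ≤ m) (hmk : m ≤ k) :
    minPeriod (zeroOneWord k) (2 * m) (4 * k + 1 - 2 * m) = 2 * (k - m) + 1 := by
  refine minPeriod_eq_of_isPeriodOf (zeroOneWord_isPeriodOf hm hmk) fun q hq hper => ?_
  obtain ⟨hq1, -, hper⟩ := hper
  rcases Nat.even_or_odd q with ⟨r, rfl⟩ | ⟨r, rfl⟩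
  · have := hper (2 * k) (by omega) (by omega)
    simp only [zeroOneWord] at this
    split_ifs at this <;> omega
  · have := hper (2 * m) le_rfl (by omega)
    simp only [zeroOneWord] at this
    split_ifs at this <;> omega

theorem zeroOneWord_isRun (hm : 1 ≤ m) (hmk : m ≤ k) :
    IsRun (zeroOneWord k) (4 * k) (2 * m) (4 * k + 1 - 2 * m) := by
  have hmin := zeroOneWord_minPeriod hm hmk
  refine ⟨by omega, by omega, by omega, by omega, fun _ => ?_, fun _ => ?_⟩
  · refine minPeriod_lt_minPeriod_of_le_of_le (by omega) (by omega) le_rfl fun hper => ?_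
    rw [hmin] at hper
    have := hper.2.2 (2 * m - 1) le_rfl (by omega)
    simp only [zeroOneWord] at this
    split_ifs at this <;> omega
  · refine minPeriod_lt_minPeriod_of_le_of_le (by omega) le_rfl (by omega) fun hper => ?_
    rw [hmin] at hper
    have := hper.2.2 (2 * k + 1) (by omega) (by omega)
    simp only [zeroOneWord] at this
    split_ifs at this <;> omega

end ZeroOneWord

theorem zeroOneWord_many_runs_general (k p : ℕ) :
    k - p / 2 ≤
      {ij : ℕ × ℕ | IsRun (zeroOneWord k) (4 * k) ij.1 ij.2 ∧
        p ≤ minPeriod (zeroOneWord k) ij.1 ij.2}.ncard := by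
  set runs := {ij : ℕ × ℕ | IsRun (zeroOneWord k) (4 * k) ij.1 ij.2 ∧
    p ≤ minPeriod (zeroOneWord k) ij.1 ij.2}
  have hfin : runs.Finite :=
    (setOf_isRun_finite (zeroOneWord k) (4 * k)).subset fun _ h => h.1
  have hmaps : ∀ m ∈ Set.Icc 1 (k - p / 2), (2 * m, 4 * k + 1 - 2 * m) ∈ runs := by
    rintro m ⟨hm, hmp⟩
    refine ⟨zeroOneWord_isRun hm (by omega), ?_⟩
    rw [zeroOneWord_minPeriod hm (by omega)]
    omega
  have hinj : Set.InjOn (fun m => (2 * m, 4 * k + 1 - 2 * m)) (Set.Icc 1 (k - p / 2)) :=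
    fun a _ b _ h => by simp only [Prod.mk.injEq] at h; omega
  calc k - p / 2 = (Set.Icc 1 (k - p / 2)).ncard := by rw [Set.ncard_Icc_nat]; omega
    _ ≤ _ := Set.ncard_le_ncard_of_injOn _ hmaps hinj hfin

/-- In `w = (01)^k (10)^k`, for any `1 ≤ p < 2k` the number of runs with
minimal period at least `p` is at least `k - ⌊p/2⌋`. -/
theorem zeroOneWord_many_runs (k p : ℕ) (hk : 1 ≤ k) (hp : 1 ≤ p)
    (hpk : p < 2 * k) :
    k - p / 2 ≤
      {ij : ℕ × ℕ | IsRun (zeroOneWord k) (4 * k) ij.1 ij.2 ∧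
        p ≤ minPeriod (zeroOneWord k) ij.1 ij.2}.ncard :=
  zeroOneWord_many_runs_general k p
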